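/- Let n ≥ 1, ξ₀ ∈ ℝ∖{0} and μ ∈ ℂ. Define u : ℝ^{2n} × (0,∞) → ℂ by u(x,t) = (2πt)^{−n}·(tξ₀/sinh(tξ₀))^n·exp(−(ξ₀/(2·tanh(tξ₀)))·|x|²)·e^{−μξ₀t}, where |x|² = x₁²+⋯+x_{2n}². For j = 1, …, n let A_j v = ∂v/∂x_j − i·ξ₀·x_{n+j}·v and A_{n+j} v = ∂v/∂x_{n+j} + i·ξ₀·x_j·v. Then for all x ∈ ℝ^{2n} and t > 0 one has ∂u/∂t(x,t) = ½·Σ_{j=1}^{2n} A_j(A_j(u(·,t)))(x) − μξ₀·u(x,t); that is, u solves the heat equation (Ĥ + μξ₀ + ∂_t)u = 0 for the twisted Laplacian Ĥ = −½Σ_{j=1}^{2n} A_j². -/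

import Mathlib

noncomputable section

/-- The Mehler kernel u(x,t) = (2πt)^{−n}(tξ₀/sinh(tξ₀))^n
exp(−(ξ₀/(2 tanh(tξ₀)))|x|²) e^{−μξ₀t}. -/
def mehler (n : ℕ) (ξ₀ : ℝ) (μ : ℂ) (x : Fin (2 * n) → ℝ) (t : ℝ) : ℂ :=
  ((((2 * Real.pi * t) ^ n)⁻¹ * (t * ξ₀ / Real.sinh (t * ξ₀)) ^ n *
      Real.exp (-(ξ₀ / (2 * Real.tanh (t * ξ₀))) * ∑ j, (x j) ^ 2) : ℝ) : ℂ) *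
    Complex.exp (-μ * ξ₀ * t)

/-- The twisted derivations A_j v = ∂_j v − iξ₀ x_{n+j} v (for j = 1,…,n) and
A_{n+j} v = ∂_{n+j} v + iξ₀ x_j v. -/
def Aop (n : ℕ) (ξ₀ : ℝ) (j : Fin (2 * n)) (v : (Fin (2 * n) → ℝ) → ℂ) :
    (Fin (2 * n) → ℝ) → ℂ :=
  fun x => fderiv ℝ v x (Pi.single j 1) +
    (if h : (j : ℕ) < n then
        -(Complex.I * (ξ₀ : ℂ) * (x ⟨n + (j : ℕ), by omega⟩ : ℂ) * v x)
      else
        Complex.I * (ξ₀ : ℂ) * (x ⟨(j : ℕ) - n, by have := j.2; omega⟩ : ℂ) * v x)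

/- ===================== auxiliary machinery ===================== -/

open ContinuousLinearMap

lemma hasFDerivAt_sumSq (m : ℕ) (y : Fin m → ℝ) :
    HasFDerivAt (fun z : Fin m → ℝ => ∑ i, (z i)^2)
      (∑ i, (2 * y i) • ContinuousLinearMap.proj (R := ℝ) (φ := fun _ : Fin m => ℝ) i) y := by
  apply HasFDerivAt.fun_sum
  intro i _
  have hp := (ContinuousLinearMap.proj (R := ℝ) (φ := fun _ : Fin m => ℝ) i).hasFDerivAt (x := y)
  have h2 : HasFDerivAt (fun z : Fin m → ℝ => z i * z i)
      ((y i) • ContinuousLinearMap.proj (R := ℝ) (φ := fun _ : Fin m => ℝ) i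
        + (y i) • ContinuousLinearMap.proj (R := ℝ) (φ := fun _ : Fin m => ℝ) i) y := hp.mul hp
  have he : (2 * y i) • ContinuousLinearMap.proj (R := ℝ) (φ := fun _ : Fin m => ℝ) i
      = (y i) • ContinuousLinearMap.proj (R := ℝ) (φ := fun _ : Fin m => ℝ) i
        + (y i) • ContinuousLinearMap.proj (R := ℝ) (φ := fun _ : Fin m => ℝ) i := by
    rw [two_mul, add_smul]
  rw [he]
  simpa [pow_two] using h2

lemma gauss_hasFDerivAt (m : ℕ) (a : ℝ) (C : ℂ) (y : Fin m → ℝ) :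
    HasFDerivAt (fun z : Fin m → ℝ => C * ((Real.exp (a * ∑ i, (z i)^2) : ℝ) : ℂ))
      (C • Complex.ofRealCLM.comp (Real.exp (a * ∑ i, (y i)^2) •
        (a • ∑ i, (2 * y i) • ContinuousLinearMap.proj (R := ℝ) (φ := fun _ : Fin m => ℝ) i)))
      y := by
  have h1 := (hasFDerivAt_sumSq m y).const_mul a
  have h2 := h1.exp
  have h3 := Complex.ofRealCLM.hasFDerivAt.comp y h2
  have h4 := h3.const_mul C
  exact h4

lemma gauss_fderiv_apply (m : ℕ) (a : ℝ) (C : ℂ) (y : Fin m → ℝ) (j : Fin m) :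
    fderiv ℝ (fun z : Fin m → ℝ => C * ((Real.exp (a * ∑ i, (z i)^2) : ℝ) : ℂ)) y
      (Pi.single j 1)
      = ((2 * a * y j : ℝ) : ℂ) * (C * ((Real.exp (a * ∑ i, (y i)^2) : ℝ) : ℂ)) := by
  rw [(gauss_hasFDerivAt m a C y).fderiv]
  simp [Pi.single_apply, Finset.sum_ite_eq']
  ring

lemma sumSq_clm_single (m : ℕ) (y : Fin m → ℝ) (j : Fin m) :
    (∑ i, (2 * y i) • ContinuousLinearMap.proj (R := ℝ) (φ := fun _ : Fin m => ℝ) i)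
      (Pi.single j 1) = 2 * y j := by
  simp [Pi.single_apply, Finset.sum_ite_eq']

/-- index pairing j ↔ n+j -/
def msigma (n : ℕ) (j : Fin (2 * n)) : Fin (2 * n) :=
  if h : (j : ℕ) < n then ⟨n + (j : ℕ), by omega⟩
  else ⟨(j : ℕ) - n, by have := j.2; omega⟩

def meps (n : ℕ) (j : Fin (2 * n)) : ℂ := if (j : ℕ) < n then -1 else 1

lemma msigma_lt {n : ℕ} {j : Fin (2 * n)} (h : (j : ℕ) < n) :
    ((msigma n j : Fin (2 * n)) : ℕ) = n + (j : ℕ) := by simp [msigma, h]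

lemma msigma_ge {n : ℕ} {j : Fin (2 * n)} (h : ¬ (j : ℕ) < n) :
    ((msigma n j : Fin (2 * n)) : ℕ) = (j : ℕ) - n := by simp [msigma, h]

lemma msigma_involutive (n : ℕ) : Function.Involutive (msigma n) := by
  intro j
  by_cases h : (j : ℕ) < n
  · have h1 : ((msigma n j : Fin (2 * n)) : ℕ) = n + (j : ℕ) := msigma_lt h
    have h2 : ¬ ((msigma n j : Fin (2 * n)) : ℕ) < n := by omega
    apply Fin.ext
    rw [msigma_ge h2, h1]
    omega
  · have hj := j.2
    have h1 : ((msigma n j : Fin (2 * n)) : ℕ) = (j : ℕ) - n := msigma_ge h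
    have h2 : ((msigma n j : Fin (2 * n)) : ℕ) < n := by omega
    apply Fin.ext
    rw [msigma_lt h2, h1]
    omega

lemma msigma_ne {n : ℕ} (j : Fin (2 * n)) : msigma n j ≠ j := by
  intro hEq
  have hj := j.2
  by_cases h : (j : ℕ) < n
  · have h1 := msigma_lt h
    rw [hEq] at h1; omega
  · have h1 := msigma_ge h
    rw [hEq] at h1; omega

lemma meps_msigma {n : ℕ} (j : Fin (2 * n)) :
    meps n (msigma n j) = - meps n j := by
  have hj := j.2
  by_cases h : (j : ℕ) < n
  · have h1 := msigma_lt h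
    have h2 : ¬ ((msigma n j : Fin (2 * n)) : ℕ) < n := by omega
    simp [meps, h, h2]
  · have h1 := msigma_ge h
    have h2 : ((msigma n j : Fin (2 * n)) : ℕ) < n := by omega
    simp [meps, h, h2]

/-- Aop rewritten via msigma/meps. -/
lemma Aop_eq (n : ℕ) (ξ₀ : ℝ) (j : Fin (2 * n)) (v : (Fin (2 * n) → ℝ) → ℂ)
    (x : Fin (2 * n) → ℝ) :
    Aop n ξ₀ j v x = fderiv ℝ v x (Pi.single j 1) +
      meps n j * (Complex.I * (ξ₀ : ℂ) * ((x (msigma n j) : ℝ) : ℂ)) * v x := by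
  unfold Aop
  by_cases h : (j : ℕ) < n
  · rw [dif_pos h]
    have hs : msigma n j = ⟨n + (j : ℕ), by omega⟩ := by simp [msigma, h]
    rw [hs]
    simp [meps, h]
    try ring
  · rw [dif_neg h]
    have hs : msigma n j = ⟨(j : ℕ) - n, by have := j.2; omega⟩ := by simp [msigma, h]
    rw [hs]
    simp [meps, h]

def Pfun (n : ℕ) (ξ₀ a : ℝ) (j : Fin (2 * n)) (y : Fin (2 * n) → ℝ) : ℂ :=
  ((2 * a * y j : ℝ) : ℂ) + meps n j * (Complex.I * (ξ₀ : ℂ) * ((y (msigma n j) : ℝ) : ℂ))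

def Mclm (n : ℕ) (ξ₀ a : ℝ) (j : Fin (2 * n)) : (Fin (2 * n) → ℝ) →L[ℝ] ℂ :=
  (((2 * a : ℝ) : ℂ)) • (Complex.ofRealCLM.comp (ContinuousLinearMap.proj j)) +
  (meps n j * Complex.I * (ξ₀ : ℂ)) •
    (Complex.ofRealCLM.comp (ContinuousLinearMap.proj (msigma n j)))

lemma Pfun_eq_clm (n : ℕ) (ξ₀ a : ℝ) (j : Fin (2 * n)) :
    Pfun n ξ₀ a j = ⇑(Mclm n ξ₀ a j) := by
  funext y
  simp [Pfun, Mclm]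
  push_cast
  ring

lemma Pfun_hasFDerivAt (n : ℕ) (ξ₀ a : ℝ) (j : Fin (2 * n)) (y : Fin (2 * n) → ℝ) :
    HasFDerivAt (Pfun n ξ₀ a j) (Mclm n ξ₀ a j) y := by
  rw [Pfun_eq_clm]
  exact (Mclm n ξ₀ a j).hasFDerivAt

lemma Mclm_single (n : ℕ) (ξ₀ a : ℝ) (j : Fin (2 * n)) :
    (Mclm n ξ₀ a j) (Pi.single j 1) = ((2 * a : ℝ) : ℂ) := by
  have h0 : (Pi.single j 1 : Fin (2 * n) → ℝ) (msigma n j) = 0 :=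
    Pi.single_eq_of_ne (msigma_ne j) 1
  simp [Mclm, h0]

/-- Second twисted derivative of the Gaussian. -/
lemma Aop2_gauss (n : ℕ) (ξ₀ a : ℝ) (C : ℂ) (j : Fin (2 * n)) (x : Fin (2 * n) → ℝ) :
    Aop n ξ₀ j (Aop n ξ₀ j (fun z => C * ((Real.exp (a * ∑ i, (z i)^2) : ℝ) : ℂ))) x
      = (((2 * a : ℝ) : ℂ) + (Pfun n ξ₀ a j x)^2) *
          (C * ((Real.exp (a * ∑ i, (x i)^2) : ℝ) : ℂ)) := by
  have hA1 : Aop n ξ₀ j (fun z => C * ((Real.exp (a * ∑ i, (z i)^2) : ℝ) : ℂ))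
      = fun y => Pfun n ξ₀ a j y * (C * ((Real.exp (a * ∑ i, (y i)^2) : ℝ) : ℂ)) := by
    funext y
    rw [Aop_eq, gauss_fderiv_apply]
    simp only [Pfun]
    ring
  rw [Aop_eq, hA1]
  have hprod := (Pfun_hasFDerivAt n ξ₀ a j x).fun_mul (gauss_hasFDerivAt (2*n) a C x)
  rw [hprod.fderiv]
  have happ : (Pfun n ξ₀ a j x •
        (C • Complex.ofRealCLM.comp (Real.exp (a * ∑ i, (x i)^2) •
          (a • ∑ i, (2 * x i) • ContinuousLinearMap.proj (R := ℝ) (φ := fun _ : Fin (2*n) => ℝ) i)))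
      + (C * ((Real.exp (a * ∑ i, (x i)^2) : ℝ) : ℂ)) • Mclm n ξ₀ a j) (Pi.single j 1)
      = Pfun n ξ₀ a j x * (((2 * a * x j : ℝ) : ℂ) *
          (C * ((Real.exp (a * ∑ i, (x i)^2) : ℝ) : ℂ)))
        + (C * ((Real.exp (a * ∑ i, (x i)^2) : ℝ) : ℂ)) * ((2 * a : ℝ) : ℂ) := by
    simp only [ContinuousLinearMap.add_apply, ContinuousLinearMap.smul_apply,
      ContinuousLinearMap.comp_apply, Mclm_single, sumSq_clm_single,
      Complex.ofRealCLM_apply, smul_eq_mul]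
    push_cast
    ring
  rw [happ]
  simp only [Pfun]
  push_cast
  ring

lemma meps_sq (n : ℕ) (j : Fin (2 * n)) : (meps n j)^2 = 1 := by
  unfold meps; split_ifs <;> norm_num

lemma sum_msigma_sq (n : ℕ) (x : Fin (2 * n) → ℝ) :
    ∑ j, (x (msigma n j))^2 = ∑ j, (x j)^2 :=
  Equiv.sum_comp ((msigma_involutive n).toPerm) (fun j => (x j)^2)

lemma sum_cross_zero (n : ℕ) (ξ₀ : ℝ) (x : Fin (2 * n) → ℝ) :
    ∑ j : Fin (2 * n),
      ((x j : ℝ) : ℂ) * (meps n j * (Complex.I * (ξ₀ : ℂ) * ((x (msigma n j) : ℝ) : ℂ))) = 0 := by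
  apply Finset.sum_ninvolution (msigma n)
  · intro j
    rw [meps_msigma, (msigma_involutive n) j]
    ring
  · intro j _
    exact msigma_ne j
  · intro j
    exact Finset.mem_univ _
  · exact msigma_involutive n

lemma rhs_sum (n : ℕ) (ξ₀ a : ℝ) (C : ℂ) (x : Fin (2 * n) → ℝ) :
    ∑ j : Fin (2 * n),
        Aop n ξ₀ j (Aop n ξ₀ j (fun z => C * ((Real.exp (a * ∑ i, (z i)^2) : ℝ) : ℂ))) x
      = (4 * (n : ℂ) * (a : ℂ) + (4 * (a : ℂ)^2 - (ξ₀ : ℂ)^2) * ((∑ i, (x i)^2 : ℝ) : ℂ)) *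
          (C * ((Real.exp (a * ∑ i, (x i)^2) : ℝ) : ℂ)) := by
  rw [Finset.sum_congr rfl (fun j _ => Aop2_gauss n ξ₀ a C j x), ← Finset.sum_mul]
  congr 1
  have split : ∀ j : Fin (2 * n), (((2 * a : ℝ) : ℂ) + (Pfun n ξ₀ a j x)^2)
      = ((2 * (a : ℂ) + 4 * (a : ℂ)^2 * ((x j : ℝ) : ℂ)^2
            - (ξ₀ : ℂ)^2 * ((x (msigma n j) : ℝ) : ℂ)^2)
        + 4 * (a : ℂ) *
            (((x j : ℝ) : ℂ) * (meps n j * (Complex.I * (ξ₀ : ℂ) * ((x (msigma n j) : ℝ) : ℂ))))) := by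
    intro j
    simp only [Pfun]
    push_cast
    by_cases h : (j : ℕ) < n
    · simp only [meps, if_pos h]
      linear_combination ((ξ₀ : ℂ)^2 * ((x (msigma n j) : ℝ) : ℂ)^2) * Complex.I_sq
    · simp only [meps, if_neg h]
      linear_combination ((ξ₀ : ℂ)^2 * ((x (msigma n j) : ℝ) : ℂ)^2) * Complex.I_sq
  rw [Finset.sum_congr rfl (fun j _ => split j), Finset.sum_add_distrib,
    Finset.sum_sub_distrib, Finset.sum_add_distrib]
  have h4 : ∑ j : Fin (2 * n), 4 * (a : ℂ) *
      (((x j : ℝ) : ℂ) * (meps n j * (Complex.I * (ξ₀ : ℂ) * ((x (msigma n j) : ℝ) : ℂ)))) = 0 := by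
    rw [← Finset.mul_sum, sum_cross_zero n ξ₀ x]
    ring
  have h1 : ∑ _j : Fin (2 * n), (2 * (a : ℂ)) = 2 * (n : ℂ) * (2 * (a : ℂ)) := by
    rw [Finset.sum_const, Finset.card_univ, Fintype.card_fin, nsmul_eq_mul]
    push_cast
    ring
  have h2 : ∑ j : Fin (2 * n), 4 * (a : ℂ)^2 * ((x j : ℝ) : ℂ)^2
      = 4 * (a : ℂ)^2 * ((∑ i, (x i)^2 : ℝ) : ℂ) := by
    rw [← Finset.mul_sum]
    push_cast
    ring
  have h3 : ∑ j : Fin (2 * n), (ξ₀ : ℂ)^2 * ((x (msigma n j) : ℝ) : ℂ)^2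
      = (ξ₀ : ℂ)^2 * ((∑ i, (x i)^2 : ℝ) : ℂ) := by
    rw [← Finset.mul_sum]
    congr 1
    rw [← sum_msigma_sq n x]
    push_cast
    rfl
  rw [h1, h2, h3, h4]
  ring

lemma deriv_r_eq (n : ℕ) (hn : 1 ≤ n) (ξ₀ Q sh ch E : ℝ) (hsh : sh ≠ 0)
    (hch : ch^2 = sh^2 + 1) :
    (-(↑n * sh^(n-1) * (ch * ξ₀)) / (sh^n)^2) * E
      + (sh^n)⁻¹ * (E * ((-(ξ₀/2) * Q) * ((sh * ξ₀ * sh - ch * (ch * ξ₀)) / sh^2)))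
    = ((sh^n)⁻¹ * E) * (-(↑n * ξ₀ * ch / sh) + ξ₀^2 * Q / (2 * sh^2)) := by
  obtain ⟨m, rfl⟩ : ∃ m, n = m + 1 := ⟨n - 1, (Nat.succ_pred_eq_of_pos hn).symm⟩
  simp only [Nat.add_sub_cancel, pow_succ]
  have hm : sh ^ m ≠ 0 := pow_ne_zero _ hsh
  field_simp
  ring_nf
  linear_combination (ξ₀^2 * E * Q) * hch

lemma a_w_eq (n : ℕ) (ξ₀ Q sh ch a : ℝ) (hsh : sh ≠ 0) (hch : ch^2 = sh^2 + 1)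
    (ha : a = -(ξ₀ * ch / (2 * sh))) :
    -(↑n * ξ₀ * ch / sh) + ξ₀^2 * Q / (2 * sh^2) = 2 * ↑n * a + (2 * a^2 - ξ₀^2/2) * Q := by
  subst ha
  field_simp
  ring_nf
  linear_combination (-Q*ξ₀^2) * hch

/-- The Mehler kernel solves the twisted heat equation
∂u/∂t = ½ Σ_j A_j(A_j u(·,t)) − μξ₀ u, i.e. (Ĥ + μξ₀ + ∂_t)u = 0 with Ĥ = −½ΣA_j². -/
theorem stmt14 (n : ℕ) (hn : 1 ≤ n) (ξ₀ : ℝ) (hξ₀ : ξ₀ ≠ 0) (μ : ℂ) :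
    ∀ (x : Fin (2 * n) → ℝ) (t : ℝ), 0 < t →
      deriv (fun s : ℝ => mehler n ξ₀ μ x s) t =
        (1 / 2 : ℂ) *
            ∑ j : Fin (2 * n), Aop n ξ₀ j (Aop n ξ₀ j (fun y => mehler n ξ₀ μ y t)) x -
          μ * (ξ₀ : ℂ) * mehler n ξ₀ μ x t := by
  intro x t ht
  have hs0 : t * ξ₀ ≠ 0 := mul_ne_zero ht.ne' hξ₀
  have hsh : Real.sinh (t * ξ₀) ≠ 0 := Real.sinh_ne_zero.2 hs0
  have hch : Real.cosh (t * ξ₀) ≠ 0 := (Real.cosh_pos _).ne'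
  have hch2 : Real.cosh (t * ξ₀) ^ 2 = Real.sinh (t * ξ₀) ^ 2 + 1 := Real.cosh_sq _
  have hpi : (2 * Real.pi) ≠ 0 := by positivity
  -- the time-side representation of the kernel
  have heq : (fun s : ℝ => mehler n ξ₀ μ x s) =ᶠ[nhds t]
      (fun s : ℝ => (((ξ₀^n * ((2 * Real.pi)^n)⁻¹ *
          (((Real.sinh (s * ξ₀))^n)⁻¹ *
          Real.exp ((-(ξ₀/2) * (∑ i, (x i)^2)) *
            (Real.cosh (s * ξ₀) / Real.sinh (s * ξ₀))))) : ℝ) : ℂ) *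
        Complex.exp (-μ * (ξ₀ : ℂ) * ((s : ℝ) : ℂ))) := by
    have hmem : {s : ℝ | s ≠ 0} ∈ nhds t := isOpen_ne.mem_nhds ht.ne'
    filter_upwards [hmem] with s hs
    have hs0' : s * ξ₀ ≠ 0 := mul_ne_zero hs hξ₀
    have hshs : Real.sinh (s * ξ₀) ≠ 0 := Real.sinh_ne_zero.2 hs0'
    have hchs : Real.cosh (s * ξ₀) ≠ 0 := (Real.cosh_pos _).ne'
    unfold mehler
    have harg : -(ξ₀ / (2 * Real.tanh (s * ξ₀))) * (∑ i, (x i)^2)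
        = (-(ξ₀/2) * (∑ i, (x i)^2)) * (Real.cosh (s * ξ₀) / Real.sinh (s * ξ₀)) := by
      rw [Real.tanh_eq_sinh_div_cosh]
      field_simp
      try ring
    have hpre : ((2 * Real.pi * s)^n)⁻¹ * (s * ξ₀ / Real.sinh (s * ξ₀))^n
        = ξ₀^n * ((2 * Real.pi)^n)⁻¹ * ((Real.sinh (s * ξ₀))^n)⁻¹ := by
      rw [div_pow, mul_pow, mul_pow]
      field_simp
      ring
    have hreal : ((2 * Real.pi * s)^n)⁻¹ * (s * ξ₀ / Real.sinh (s * ξ₀))^n *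
        Real.exp (-(ξ₀ / (2 * Real.tanh (s * ξ₀))) * ∑ i, (x i)^2)
        = ξ₀^n * ((2 * Real.pi)^n)⁻¹ * (((Real.sinh (s * ξ₀))^n)⁻¹ *
          Real.exp ((-(ξ₀/2) * (∑ i, (x i)^2)) *
            (Real.cosh (s * ξ₀) / Real.sinh (s * ξ₀)))) := by
      rw [harg, hpre]
      ring
    rw [hreal]
  -- derivative of the time-side representation
  have h_lin : HasDerivAt (fun s : ℝ => s * ξ₀) ξ₀ t := by
    simpa using (hasDerivAt_id t).mul_const ξ₀
  have h_sh : HasDerivAt (fun s : ℝ => Real.sinh (s * ξ₀))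
      (Real.cosh (t * ξ₀) * ξ₀) t := by have := (Real.hasDerivAt_sinh (t * ξ₀)).comp t h_lin; exact this
  have h_ch : HasDerivAt (fun s : ℝ => Real.cosh (s * ξ₀))
      (Real.sinh (t * ξ₀) * ξ₀) t := by have := (Real.hasDerivAt_cosh (t * ξ₀)).comp t h_lin; exact this
  have h1 : HasDerivAt (fun s : ℝ => ((Real.sinh (s * ξ₀))^n)⁻¹)
      (-((n : ℝ) * (Real.sinh (t * ξ₀))^(n-1) * (Real.cosh (t * ξ₀) * ξ₀)) /
        ((Real.sinh (t * ξ₀))^n)^2) t :=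
    (h_sh.pow n).inv (pow_ne_zero n hsh)
  have h2 : HasDerivAt (fun s : ℝ => Real.cosh (s * ξ₀) / Real.sinh (s * ξ₀))
      ((Real.sinh (t * ξ₀) * ξ₀ * Real.sinh (t * ξ₀) -
        Real.cosh (t * ξ₀) * (Real.cosh (t * ξ₀) * ξ₀)) / (Real.sinh (t * ξ₀))^2) t :=
    h_ch.div h_sh hsh
  have h3 : HasDerivAt (fun s : ℝ => Real.exp ((-(ξ₀/2) * (∑ i, (x i)^2)) *
        (Real.cosh (s * ξ₀) / Real.sinh (s * ξ₀))))
      (Real.exp ((-(ξ₀/2) * (∑ i, (x i)^2)) *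
        (Real.cosh (t * ξ₀) / Real.sinh (t * ξ₀))) *
        ((-(ξ₀/2) * (∑ i, (x i)^2)) *
          ((Real.sinh (t * ξ₀) * ξ₀ * Real.sinh (t * ξ₀) -
            Real.cosh (t * ξ₀) * (Real.cosh (t * ξ₀) * ξ₀)) / (Real.sinh (t * ξ₀))^2))) t :=
    (h2.const_mul _).exp
  have h4 := (h1.fun_mul h3).const_mul (ξ₀^n * ((2 * Real.pi)^n)⁻¹)
  have h5 : HasDerivAt (fun s : ℝ => Complex.exp (-μ * (ξ₀ : ℂ) * ((s : ℝ) : ℂ)))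
      (Complex.exp (-μ * (ξ₀ : ℂ) * ((t : ℝ) : ℂ)) * (-μ * (ξ₀ : ℂ))) t := by
    have hl : HasDerivAt (fun s : ℝ => -μ * (ξ₀ : ℂ) * ((s : ℝ) : ℂ)) (-μ * (ξ₀ : ℂ)) t := by
      simpa using ((hasDerivAt_id t).ofReal_comp).const_mul (-μ * (ξ₀ : ℂ))
    exact hl.cexp
  have hφ := (h4.ofReal_comp).fun_mul h5
  have hd2 := hφ.deriv
  beta_reduce at hd2
  rw [heq.deriv_eq, hd2]
  -- the spatial side
  have hfun : (fun y : Fin (2 * n) → ℝ => mehler n ξ₀ μ y t)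
      = (fun z : Fin (2 * n) → ℝ =>
          (((((2 * Real.pi * t) ^ n)⁻¹ * (t * ξ₀ / Real.sinh (t * ξ₀)) ^ n : ℝ) : ℂ) *
            Complex.exp (-μ * (ξ₀ : ℂ) * ((t : ℝ) : ℂ))) *
          ((Real.exp (-(ξ₀ / (2 * Real.tanh (t * ξ₀))) * ∑ i, (z i)^2) : ℝ) : ℂ)) := by
    funext z
    unfold mehler
    push_cast
    ring
  rw [hfun, rhs_sum]
  -- identify the common factor
  have hx2 : ((((2 * Real.pi * t) ^ n)⁻¹ * (t * ξ₀ / Real.sinh (t * ξ₀)) ^ n : ℝ) : ℂ) *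
        Complex.exp (-μ * (ξ₀ : ℂ) * ((t : ℝ) : ℂ)) *
        ((Real.exp (-(ξ₀ / (2 * Real.tanh (t * ξ₀))) * ∑ i, (x i)^2) : ℝ) : ℂ)
      = (((ξ₀^n * ((2 * Real.pi)^n)⁻¹ *
          (((Real.sinh (t * ξ₀))^n)⁻¹ *
          Real.exp ((-(ξ₀/2) * (∑ i, (x i)^2)) *
            (Real.cosh (t * ξ₀) / Real.sinh (t * ξ₀))))) : ℝ) : ℂ) *
        Complex.exp (-μ * (ξ₀ : ℂ) * ((t : ℝ) : ℂ)) := by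
    have h := heq.eq_of_nhds
    unfold mehler at h
    rw [← h]
    push_cast
    ring
  -- mehler x t also needs rewriting
  have hxt : mehler n ξ₀ μ x t
      = ((((2 * Real.pi * t) ^ n)⁻¹ * (t * ξ₀ / Real.sinh (t * ξ₀)) ^ n : ℝ) : ℂ) *
        Complex.exp (-μ * (ξ₀ : ℂ) * ((t : ℝ) : ℂ)) *
        ((Real.exp (-(ξ₀ / (2 * Real.tanh (t * ξ₀))) * ∑ i, (x i)^2) : ℝ) : ℂ) := by
    unfold mehler
    push_cast
    ring
  rw [hxt, hx2]
  -- now everything is in terms of the t-side factor; use the real derivative identities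
  have ha : -(ξ₀ / (2 * Real.tanh (t * ξ₀)))
      = -(ξ₀ * Real.cosh (t * ξ₀) / (2 * Real.sinh (t * ξ₀))) := by
    rw [Real.tanh_eq_sinh_div_cosh]
    field_simp
  have hr' := deriv_r_eq n hn ξ₀ (∑ i, (x i)^2) (Real.sinh (t * ξ₀)) (Real.cosh (t * ξ₀))
      (Real.exp ((-(ξ₀/2) * (∑ i, (x i)^2)) *
        (Real.cosh (t * ξ₀) / Real.sinh (t * ξ₀)))) hsh hch2
  have hw := a_w_eq n ξ₀ (∑ i, (x i)^2) (Real.sinh (t * ξ₀)) (Real.cosh (t * ξ₀))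
      (-(ξ₀ / (2 * Real.tanh (t * ξ₀)))) hsh hch2 ha
  -- final algebra
  have hD := congrArg (fun r : ℝ =>
    ((ξ₀^n * ((2 * Real.pi)^n)⁻¹ * r : ℝ) : ℂ)) hr'
  rw [hD, hw]
  push_cast
  ring
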